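/- arXiv:2601.13496 — 2 statements merged into one kernel-verified Lean document; each statement's English description precedes it below -/
import Mathlib

section
/- Let p : ℝ → ℝ be continuous and let a < b be real numbers. Define f(x) = ∫_{a}^{x} (x − t)·p(t) dt + ∫_{x}^{b} (b − t)·p(t) dt for x ∈ (a, b). Then f is differentiable on (a, b) with f′(x) = ∫_{a}^{x} p(t) dt − (b − x)·p(x). Moreover, if p(x) > 0, then f′(x) = 0 if and only if b = x + (1/p(x)) · ∫_{a}^{x} p(t) dt. -/
open MeasureTheory

/-- Writing `y - t = (y - b) + (b - t)` on `[a, y]` moves all dependence on `y` into the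
product `(y - b) * ∫ t in a..y, p t`, which the fundamental theorem of calculus differentiates. -/
lemma integral_sub_mul_add_integral_sub_mul (p : ℝ → ℝ) (hp : Continuous p) (a b y : ℝ) :
    (∫ t in a..y, (y - t) * p t) + ∫ t in y..b, (b - t) * p t
      = (y - b) * (∫ t in a..y, p t) + ∫ t in a..b, (b - t) * p t := by
  have hint (c u v : ℝ) : IntervalIntegrable (fun t => (c - t) * p t) volume u v :=
    ((continuous_const.sub continuous_id).mul hp).intervalIntegrable u v
  have hadj : (∫ t in a..y, (b - t) * p t) + ∫ t in y..b, (b - t) * p t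
      = ∫ t in a..b, (b - t) * p t :=
    intervalIntegral.integral_add_adjacent_intervals (hint b a y) (hint b y b)
  have hsplit : (∫ t in a..y, (y - t) * p t)
      = (y - b) * (∫ t in a..y, p t) + ∫ t in a..y, (b - t) * p t := by
    rw [← intervalIntegral.integral_const_mul,
      ← intervalIntegral.integral_add ((hp.intervalIntegrable a y).const_mul _) (hint b a y)]
    congr 1 with t
    ring
  rw [hsplit, add_assoc, hadj]

lemma hasDerivAt_integral_sub_mul_add_integral_sub_mul (p : ℝ → ℝ) (hp : Continuous p)
    (a b x : ℝ) :
    HasDerivAt (fun y => (∫ t in a..y, (y - t) * p t) + ∫ t in y..b, (b - t) * p t)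
      ((∫ t in a..x, p t) - (b - x) * p x) x := by
  simp only [integral_sub_mul_add_integral_sub_mul p hp]
  have hP : HasDerivAt (fun y => ∫ t in a..y, p t) (p x) x :=
    intervalIntegral.integral_hasDerivAt_right (hp.intervalIntegrable a x)
      (hp.stronglyMeasurableAtFilter _ _) hp.continuousAt
  exact ((((hasDerivAt_id' x).sub_const b).mul hP).add_const _).congr_deriv (by ring)

lemma sub_sub_mul_eq_zero_iff_eq_add_one_div_mul {I q b x : ℝ} (hq : q ≠ 0) :
    I - (b - x) * q = 0 ↔ b = x + 1 / q * I := by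
  rw [sub_eq_zero, ← sub_eq_iff_eq_add', one_div, eq_inv_mul_iff_mul_eq₀ hq, mul_comm, eq_comm]

theorem stmt4_general (p : ℝ → ℝ) (hp : Continuous p) (a b : ℝ) :
    ∀ x ∈ Set.Ioo a b,
      HasDerivAt
        (fun y => (∫ t in a..y, (y - t) * p t) + ∫ t in y..b, (b - t) * p t)
        ((∫ t in a..x, p t) - (b - x) * p x) x ∧
      (0 < p x →
        (((∫ t in a..x, p t) - (b - x) * p x = 0) ↔
          b = x + (1 / p x) * ∫ t in a..x, p t)) :=
  fun x _ => ⟨hasDerivAt_integral_sub_mul_add_integral_sub_mul p hp a b x,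
    fun hpx => sub_sub_mul_eq_zero_iff_eq_add_one_div_mul hpx.ne'⟩

/-- For continuous `p` and `a < b`, the function
`f(x) = ∫_a^x (x − t)·p(t) dt + ∫_x^b (b − t)·p(t) dt` is differentiable on `(a, b)`
with `f′(x) = ∫_a^x p(t) dt − (b − x)·p(x)`; moreover, when `p(x) > 0`, the
first-order condition `f′(x) = 0` holds iff `b = x + (1/p(x))·∫_a^x p(t) dt`. -/
theorem stmt4 (p : ℝ → ℝ) (hp : Continuous p) (a b : ℝ) (hab : a < b) :
    ∀ x ∈ Set.Ioo a b,
      HasDerivAt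
        (fun y => (∫ t in a..y, (y - t) * p t) + ∫ t in y..b, (b - t) * p t)
        ((∫ t in a..x, p t) - (b - x) * p x) x ∧
      (0 < p x →
        (((∫ t in a..x, p t) - (b - x) * p x = 0) ↔
          b = x + (1 / p x) * ∫ t in a..x, p t)) :=
  stmt4_general p hp a b
end

section
/- Let k ≥ 2, U > 0, and let p : ℝ → ℝ be continuous. Consider poll times 0 = L_0 < L_1 < ⋯ < L_{k-1} < L_k = U with p(L_i) > 0 for i = 1, …, k−1, and define Q(L_1, …, L_{k-1}) = ∑_{i=1}^{k} ∫_{L_{i-1}}^{L_i} (L_i − t)·p(t) dt (with L_0 = 0 and L_k = U held fixed). Then for each i ∈ {1, …, k−1}, the partial derivative of Q with respect to L_i equals ∫_{L_{i-1}}^{L_i} p(t) dt − (L_{i+1} − L_i)·p(L_i). Consequently, all partial derivatives ∂Q/∂L_i (i = 1, …, k−1) vanish if and only if the recurrence L_{i+1} = L_i + (1/p(L_i)) · ∫_{L_{i-1}}^{L_i} p(t) dt holds for all i = 1, …, k−1. -/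
open MeasureTheory

/-! Only the two segments adjacent to `L i` depend on it. Differentiating `∫_a^y (y - t) p(t) dt`
in its upper limit gives `∫_a^y p`, since the integrand vanishes at `t = y`; differentiating
`∫_y^b (b - t) p(t) dt` in its lower limit gives `-(b - y) p(y)`. As `p (L i) > 0`, the vanishing of
the sum of the two can be solved for `L (i + 1)`. -/

lemma hasDerivAt_integral_sub_mul_upper {p : ℝ → ℝ} (hp : Continuous p) (a x : ℝ) :
    HasDerivAt (fun y => ∫ t in a..y, (y - t) * p t) (∫ t in a..x, p t) x := by
  have hmul : Continuous fun t => t * p t := continuous_id.mul hp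
  have hsplit : (fun y => ∫ t in a..y, (y - t) * p t) =
      fun y => y * (∫ t in a..y, p t) - ∫ t in a..y, t * p t := by
    funext y
    simp only [sub_mul]
    rw [intervalIntegral.integral_sub
      ((show Continuous fun t => y * p t from continuous_const.mul hp).intervalIntegrable _ _)
      (hmul.intervalIntegrable _ _), intervalIntegral.integral_const_mul]
  have hderiv_p : HasDerivAt (fun y => ∫ t in a..y, p t) (p x) x :=
    intervalIntegral.integral_hasDerivAt_right (hp.intervalIntegrable _ _)
      (hp.stronglyMeasurableAtFilter _ _) hp.continuousAt
  have hderiv_mul : HasDerivAt (fun y => ∫ t in a..y, t * p t) (x * p x) x :=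
    intervalIntegral.integral_hasDerivAt_right (hmul.intervalIntegrable _ _)
      (hmul.stronglyMeasurableAtFilter _ _) hmul.continuousAt
  rw [hsplit]
  refine (((hasDerivAt_id' x).fun_mul hderiv_p).fun_sub hderiv_mul).congr_deriv ?_
  ring

lemma hasDerivAt_integral_sub_mul_lower {p : ℝ → ℝ} (hp : Continuous p) (b x : ℝ) :
    HasDerivAt (fun y => ∫ t in y..b, (b - t) * p t) (-((b - x) * p x)) x := by
  have hc : Continuous fun t => (b - t) * p t := (continuous_const.sub continuous_id).mul hp
  exact intervalIntegral.integral_hasDerivAt_left (hc.intervalIntegrable _ _)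
    (hc.stronglyMeasurableAtFilter _ _) hc.continuousAt

lemma hasDerivAt_segment_update {p : ℝ → ℝ} (hp : Continuous p) (L : ℕ → ℝ) (i j : ℕ) :
    HasDerivAt
      (fun y => ∫ t in Function.update L i y j..Function.update L i y (j + 1),
        (Function.update L i y (j + 1) - t) * p t)
      ((if j + 1 = i then ∫ t in L j..L i, p t else 0) +
        if j = i then -((L (i + 1) - L i) * p (L i)) else 0) (L i) := by
  by_cases hupper : j + 1 = i
  · subst hupper
    simp only [Function.update_self, Function.update_of_ne (Nat.succ_ne_self j).symm, if_true,
      if_neg (Nat.succ_ne_self j).symm, add_zero]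
    exact hasDerivAt_integral_sub_mul_upper hp (L j) (L (j + 1))
  by_cases hlower : j = i
  · subst hlower
    simp only [Function.update_self, Function.update_of_ne (Nat.succ_ne_self j), if_true,
      if_neg hupper, zero_add]
    exact hasDerivAt_integral_sub_mul_lower hp (L (j + 1)) (L j)
  · simp only [Function.update_of_ne hlower, Function.update_of_ne hupper, if_neg hlower,
      if_neg hupper, add_zero]
    exact hasDerivAt_const _ _

lemma hasDerivAt_sum_segments_update {p : ℝ → ℝ} (hp : Continuous p) (L : ℕ → ℝ) {k i : ℕ}
    (hi : 1 ≤ i) (hik : i < k) :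
    HasDerivAt
      (fun y => ∑ j ∈ Finset.range k,
        ∫ t in Function.update L i y j..Function.update L i y (j + 1),
          (Function.update L i y (j + 1) - t) * p t)
      ((∫ t in L (i - 1)..L i, p t) - (L (i + 1) - L i) * p (L i)) (L i) := by
  obtain ⟨m, rfl⟩ := Nat.exists_eq_add_of_le' hi
  refine (HasDerivAt.fun_sum fun j _ => hasDerivAt_segment_update hp L (m + 1) j).congr_deriv ?_
  simp only [Finset.sum_add_distrib, Nat.add_right_cancel_iff, Finset.sum_ite_eq',
    Finset.mem_range, add_tsub_cancel_right]
  rw [if_pos (by omega), if_pos hik]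
  ring

lemma sub_mul_eq_zero_iff_eq_add_one_div_mul {A a b c : ℝ} (hc : 0 < c) :
    A - (b - a) * c = 0 ↔ b = a + 1 / c * A := by
  rw [sub_eq_zero, one_div, ← div_eq_inv_mul, ← sub_eq_iff_eq_add', eq_div_iff hc.ne', eq_comm]

theorem stmt5_general (k : ℕ)
    (p : ℝ → ℝ) (hp : Continuous p)
    (L : ℕ → ℝ)
    (hpos : ∀ i, 1 ≤ i → i ≤ k - 1 → 0 < p (L i)) :
    (∀ i, 1 ≤ i → i ≤ k - 1 →
      HasDerivAt
        (fun y => ∑ j ∈ Finset.range k,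
          ∫ t in Function.update L i y j..Function.update L i y (j + 1),
            (Function.update L i y (j + 1) - t) * p t)
        ((∫ t in L (i - 1)..L i, p t) - (L (i + 1) - L i) * p (L i)) (L i)) ∧
    ((∀ i, 1 ≤ i → i ≤ k - 1 →
        (∫ t in L (i - 1)..L i, p t) - (L (i + 1) - L i) * p (L i) = 0) ↔
      (∀ i, 1 ≤ i → i ≤ k - 1 →
        L (i + 1) = L i + (1 / p (L i)) * ∫ t in L (i - 1)..L i, p t)) :=
  ⟨fun _ hi hik => hasDerivAt_sum_segments_update hp L hi (by omega),
    forall_congr' fun i => forall_congr' fun hi => forall_congr' fun hik =>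
      sub_mul_eq_zero_iff_eq_add_one_div_mul (hpos i hi hik)⟩

/-- For poll times `0 = L_0 < L_1 < ⋯ < L_{k-1} < L_k = U` (endpoints
held fixed), with `p` continuous and `p(L_i) > 0` for `i = 1, …, k−1`, the partial
derivative of `Q(L_1, …, L_{k-1}) = ∑_{i=1}^k ∫_{L_{i-1}}^{L_i} (L_i − t)·p(t) dt`
with respect to `L_i` equals `∫_{L_{i-1}}^{L_i} p(t) dt − (L_{i+1} − L_i)·p(L_i)`;
consequently all partial derivatives vanish iff the recurrence
`L_{i+1} = L_i + (1/p(L_i))·∫_{L_{i-1}}^{L_i} p(t) dt` holds for all `i = 1, …, k−1`. -/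
theorem stmt5 (k : ℕ) (hk : 2 ≤ k) (U : ℝ) (hU : 0 < U)
    (p : ℝ → ℝ) (hp : Continuous p)
    (L : ℕ → ℝ) (hL0 : L 0 = 0) (hLk : L k = U)
    (hmono : ∀ i, i < k → L i < L (i + 1))
    (hpos : ∀ i, 1 ≤ i → i ≤ k - 1 → 0 < p (L i)) :
    (∀ i, 1 ≤ i → i ≤ k - 1 →
      HasDerivAt
        (fun y => ∑ j ∈ Finset.range k,
          ∫ t in Function.update L i y j..Function.update L i y (j + 1),
            (Function.update L i y (j + 1) - t) * p t)
        ((∫ t in L (i - 1)..L i, p t) - (L (i + 1) - L i) * p (L i)) (L i)) ∧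
    ((∀ i, 1 ≤ i → i ≤ k - 1 →
        (∫ t in L (i - 1)..L i, p t) - (L (i + 1) - L i) * p (L i) = 0) ↔
      (∀ i, 1 ≤ i → i ≤ k - 1 →
        L (i + 1) = L i + (1 / p (L i)) * ∫ t in L (i - 1)..L i, p t)) :=
  stmt5_general k p hp L hpos
end
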